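/- For the cubic form F = p₁(q₂² − q₁q₃) + p₂(q₁q₄ − q₂q₃) + p₃(q₃² − q₂q₄) + q₅(∑ᵢ rᵢqᵢ), every point of the locus {q₁ = 1, q₃ = q₂², q₄ = q₂³, q₅ = 0, p₁ = q₂²p₃, p₂ = q₂p₃, r₁ = −q₂r₂ − q₂²r₃ − q₂³r₄} (with q₂, p₃, r₂, r₃, r₄, r₅ free parameters) is a singular point of the hypersurface {F = 0} in ℙ¹². -/
import Mathlib


open MvPolynomial

/-- The cubic form of Proposition 6.1: variables X 0, X 1, X 2 are p₁,p₂,p₃;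
X 3,…,X 7 are r₁,…,r₅; X 8,…,X 12 are q₁,…,q₅. -/
noncomputable def Fcubic : MvPolynomial (Fin 13) ℂ :=
  X 0 * (X 9 ^ 2 - X 8 * X 10) + X 1 * (X 8 * X 11 - X 9 * X 10) +
    X 2 * (X 10 ^ 2 - X 9 * X 11) +
    X 12 * (X 8 * X 3 + X 9 * X 4 + X 10 * X 5 + X 11 * X 6 + X 12 * X 7)

set_option maxHeartbeats 2000000 in
/-- Every point of the parametrized 6-dimensional locus S_F is a singular point
of the cubic hypersurface {F = 0}. -/
theorem stmt15 (t p3 r2 r3 r4 r5 : ℂ) :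
    let v : Fin 13 → ℂ :=
      ![t ^ 2 * p3, t * p3, p3, -(t * r2 + t ^ 2 * r3 + t ^ 3 * r4), r2, r3, r4, r5,
        1, t, t ^ 2, t ^ 3, 0]
    eval v Fcubic = 0 ∧ ∀ j : Fin 13, eval v (pderiv j Fcubic) = 0 := by
  intro v
  have h0 : v 0 = t ^ 2 * p3 := rfl
  have h1 : v 1 = t * p3 := rfl
  have h2 : v 2 = p3 := rfl
  have h3 : v 3 = -(t * r2 + t ^ 2 * r3 + t ^ 3 * r4) := rfl
  have h4 : v 4 = r2 := rfl
  have h5 : v 5 = r3 := rfl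
  have h6 : v 6 = r4 := rfl
  have h7 : v 7 = r5 := rfl
  have h8 : v 8 = 1 := rfl
  have h9 : v 9 = t := rfl
  have h10 : v 10 = t ^ 2 := rfl
  have h11 : v 11 = t ^ 3 := rfl
  have h12 : v 12 = 0 := rfl
  constructor
  · simp only [Fcubic, map_add, map_sub, map_mul, map_pow, eval_X,
      h0, h1, h2, h3, h4, h5, h6, h7, h8, h9, h10, h11, h12]
    ring
  · intro j
    fin_cases j <;>
    · simp only [Fcubic, map_add, map_sub, map_mul, map_pow, eval_X, pderiv_X,
        pderiv_mul, pderiv_pow, Pi.single_apply, Fin.isValue,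
        h0, h1, h2, h3, h4, h5, h6, h7, h8, h9, h10, h11, h12]
      norm_num [Fin.ext_iff, show ((1:Fin 13):ℕ)=1 from rfl,
        show ((2:Fin 13):ℕ)=2 from rfl, show ((8:Fin 13):ℕ)=8 from rfl,
        show ((9:Fin 13):ℕ)=9 from rfl, show ((10:Fin 13):ℕ)=10 from rfl,
        show ((11:Fin 13):ℕ)=11 from rfl, show ((12:Fin 13):ℕ)=12 from rfl]
      try ring
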